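/- arXiv:2306.00613 — 2 statements merged into one kernel-verified Lean document; each statement's English description precedes it below -/
import Mathlib

section
/- Let Γ ≤ Sym(Ω), and let Δ₁, Δ₂ be two equivalent orbits of Γ witnessed by a bijection b′ : Δ₁ → Δ₂. Define b ∈ Sym(Ω) by b(x) = b′(x) for x ∈ Δ₁, b(x) = b′⁻¹(x) for x ∈ Δ₂, and b(x) = x otherwise. Then b commutes with every element of Γ, i.e., b is in the centralizer of Γ in Sym(Ω). -/
/-- A set is an orbit of a permutation group `Γ ≤ Sym(Ω)`. -/
def IsOrbit {Ω : Type*} (Γ : Subgroup (Equiv.Perm Ω)) (Δ : Set Ω) : Prop :=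
  ∃ ω : Ω, Δ = MulAction.orbit Γ ω

theorem IsOrbit.apply_mem_iff {Ω : Type*} {Γ : Subgroup (Equiv.Perm Ω)} {Δ : Set Ω}
    (hΔ : IsOrbit Γ Δ) {φ : Equiv.Perm Ω} (hφ : φ ∈ Γ) (x : Ω) : φ x ∈ Δ ↔ x ∈ Δ := by
  obtain ⟨ω, rfl⟩ := hΔ
  have hφx : φ x = (⟨φ, hφ⟩ : Γ) • x := rfl
  rw [hφx, ← MulAction.orbit_eq_iff, ← MulAction.orbit_eq_iff, MulAction.orbit_smul]

theorem swap_of_equivalent_orbits_centralizes_general {Ω : Type*}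
    (Γ : Subgroup (Equiv.Perm Ω)) (Δ₁ Δ₂ : Set Ω)
    (h₁ : IsOrbit Γ Δ₁) (h₂ : IsOrbit Γ Δ₂)
    (b' : Ω → Ω)
    (hequiv : ∀ φ ∈ Γ, ∀ δ ∈ Δ₁, φ (b' δ) = b' (φ δ))
    (b : Equiv.Perm Ω)
    (hb₁ : ∀ x ∈ Δ₁, b x = b' x)
    (hb₂ : ∀ x ∈ Δ₂, b x ∈ Δ₁ ∧ b' (b x) = x)
    (hbfix : ∀ x, x ∉ Δ₁ → x ∉ Δ₂ → b x = x) :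
    ∀ φ ∈ Γ, b * φ = φ * b := by
  intro φ hφ
  have hΔ₁ := h₁.apply_mem_iff hφ
  have hΔ₂ := h₂.apply_mem_iff hφ
  have on_Δ₁ : ∀ x ∈ Δ₁, b (φ x) = φ (b x) := fun x hx => by
    rw [hb₁ _ ((hΔ₁ x).2 hx), hb₁ x hx, hequiv φ hφ x hx]
  -- `b ∘ b` fixes `Δ₂` pointwise, so commuting at `b x ∈ Δ₁` transfers to `x` via injectivity of `b`.
  have on_Δ₂ : ∀ x ∈ Δ₂, b (φ x) = φ (b x) := fun x hx => by
    obtain ⟨hbx, hbbx⟩ := hb₂ x hx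
    obtain ⟨hbφx, hbbφx⟩ := hb₂ (φ x) ((hΔ₂ x).2 hx)
    apply b.injective
    rw [on_Δ₁ _ hbx, hb₁ _ hbx, hbbx, hb₁ _ hbφx, hbbφx]
  ext x
  simp only [Equiv.Perm.mul_apply]
  by_cases hx₁ : x ∈ Δ₁
  · exact on_Δ₁ x hx₁
  by_cases hx₂ : x ∈ Δ₂
  · exact on_Δ₂ x hx₂
  rw [hbfix x hx₁ hx₂, hbfix (φ x) (mt (hΔ₁ x).1 hx₁) (mt (hΔ₂ x).1 hx₂)]

/-- Given two distinct equivalent orbits `Δ₁, Δ₂` witnessed by `b'`, the permutation `b`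
acting as `b'` on `Δ₁`, as `b'⁻¹` on `Δ₂` and as the identity elsewhere commutes with
every element of `Γ`. -/
theorem swap_of_equivalent_orbits_centralizes {Ω : Type*} [Fintype Ω]
    (Γ : Subgroup (Equiv.Perm Ω)) (Δ₁ Δ₂ : Set Ω)
    (h₁ : IsOrbit Γ Δ₁) (h₂ : IsOrbit Γ Δ₂) (hne : Δ₁ ≠ Δ₂)
    (b' : Ω → Ω) (hbij : Set.BijOn b' Δ₁ Δ₂)
    (hequiv : ∀ φ ∈ Γ, ∀ δ ∈ Δ₁, φ (b' δ) = b' (φ δ))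
    (b : Equiv.Perm Ω)
    (hb₁ : ∀ x ∈ Δ₁, b x = b' x)
    (hb₂ : ∀ x ∈ Δ₂, b x ∈ Δ₁ ∧ b' (b x) = x)
    (hbfix : ∀ x, x ∉ Δ₁ → x ∉ Δ₂ → b x = x) :
    ∀ φ ∈ Γ, b * φ = φ * b :=
  swap_of_equivalent_orbits_centralizes_general Γ Δ₁ Δ₂ h₁ h₂ b' hequiv b hb₁ hb₂ hbfix
end

section
/- Let G be a colored graph with automorphism group Γ = Aut(G), and let Δ₁, Δ₂ be two orbits of Γ lying in different factors of some disjoint direct decomposition Γ = Γ₁ × Γ₂ (supports of Γ₁ and Γ₂ disjoint, Δ₁ ⊆ supp(Γ₁), Δ₂ ⊆ supp(Γ₂)). Then Δ₁ and Δ₂ are homogeneously connected in G: either every vertex of Δ₁ is adjacent to every vertex of Δ₂, or no vertex of Δ₁ is adjacent to any vertex of Δ₂. -/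
/-- The support of a permutation group: the points moved by some element. -/
def grpSupp {Ω : Type*} (Γ : Subgroup (Equiv.Perm Ω)) : Set Ω :=
  {ω | ∃ φ ∈ Γ, φ ω ≠ ω}

/-!
Fix base points `ω₁ ∈ Δ₁`, `ω₂ ∈ Δ₂`. Given `v = g ω₁` and `w = h ω₂` with `g = g₁ g₂` and
`h = h₁ h₂`, the factor `g₁` alone already moves `ω₁` to `v` and `h₂` alone moves `ω₂` to `w`,
because each factor fixes the support of the other. Hence the automorphism `g₁ h₂` maps the pair
`(ω₁, ω₂)` to `(v, w)`, so adjacency between `Δ₁` and `Δ₂` does not depend on the chosen points.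
-/

open MulAction

section

variable {Ω : Type*} {Γ Γ₁ Γ₂ : Subgroup (Equiv.Perm Ω)}

theorem apply_eq_self_of_notMem_grpSupp {φ : Equiv.Perm Ω} (hφ : φ ∈ Γ) {x : Ω}
    (hx : x ∉ grpSupp Γ) : φ x = x :=
  not_not.mp fun h => hx ⟨φ, hφ, h⟩

theorem exists_mem_left_apply_eq (hprod : ∀ g ∈ Γ, ∃ g₁ ∈ Γ₁, ∃ g₂ ∈ Γ₂, g = g₁ * g₂)
    {x y : Ω} (hx : x ∉ grpSupp Γ₂) (hy : y ∈ orbit Γ x) : ∃ g₁ ∈ Γ₁, g₁ x = y := by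
  obtain ⟨⟨g, hg⟩, rfl⟩ := hy
  obtain ⟨g₁, hg₁, g₂, hg₂, rfl⟩ := hprod g hg
  refine ⟨g₁, hg₁, ?_⟩
  change g₁ x = g₁ (g₂ x)
  rw [apply_eq_self_of_notMem_grpSupp hg₂ hx]

theorem exists_mem_right_apply_eq (hprod : ∀ g ∈ Γ, ∃ g₁ ∈ Γ₁, ∃ g₂ ∈ Γ₂, g = g₁ * g₂)
    {x y : Ω} (hy : y ∈ orbit Γ x) (hy' : y ∉ grpSupp Γ₁) : ∃ g₂ ∈ Γ₂, g₂ x = y := by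
  obtain ⟨⟨g, hg⟩, rfl⟩ := hy
  obtain ⟨g₁, hg₁, g₂, hg₂, rfl⟩ := hprod g hg
  refine ⟨g₂, hg₂, ?_⟩
  change g₂ x = g₁ (g₂ x)
  change g₁ (g₂ x) ∉ grpSupp Γ₁ at hy'
  simpa using apply_eq_self_of_notMem_grpSupp (inv_mem hg₁) hy'

theorem exists_mem_apply_eq_and_apply_eq (hle₁ : Γ₁ ≤ Γ) (hle₂ : Γ₂ ≤ Γ)
    (hprod : ∀ g ∈ Γ, ∃ g₁ ∈ Γ₁, ∃ g₂ ∈ Γ₂, g = g₁ * g₂)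
    {x₁ y₁ x₂ y₂ : Ω} (hx₁ : x₁ ∉ grpSupp Γ₂) (hy₁ : y₁ ∈ orbit Γ x₁)
    (hy₂ : y₂ ∈ orbit Γ x₂) (hy₂' : y₂ ∉ grpSupp Γ₁) :
    ∃ φ ∈ Γ, φ x₁ = y₁ ∧ φ x₂ = y₂ := by
  obtain ⟨g₁, hg₁, rfl⟩ := exists_mem_left_apply_eq hprod hx₁ hy₁
  obtain ⟨g₂, hg₂, rfl⟩ := exists_mem_right_apply_eq hprod hy₂ hy₂'
  refine ⟨g₁ * g₂, mul_mem (hle₁ hg₁) (hle₂ hg₂), ?_, ?_⟩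
  · rw [Equiv.Perm.mul_apply, apply_eq_self_of_notMem_grpSupp hg₂ hx₁]
  · rw [Equiv.Perm.mul_apply, apply_eq_self_of_notMem_grpSupp hg₁ hy₂']

end

theorem orbits_in_different_factors_homogeneously_connected_general
    {V C : Type*} (G : SimpleGraph V) (col : V → C)
    (Γ Γ₁ Γ₂ : Subgroup (Equiv.Perm V))
    (hAut : ∀ φ : Equiv.Perm V, φ ∈ Γ ↔
      ((∀ v w, G.Adj (φ v) (φ w) ↔ G.Adj v w) ∧ ∀ v, col (φ v) = col v))
    (hle₁ : Γ₁ ≤ Γ) (hle₂ : Γ₂ ≤ Γ)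
    (hdisj : Disjoint (grpSupp Γ₁) (grpSupp Γ₂))
    (hprod : ∀ g ∈ Γ, ∃ g₁ ∈ Γ₁, ∃ g₂ ∈ Γ₂, g = g₁ * g₂)
    (Δ₁ Δ₂ : Set V) (h₁ : IsOrbit Γ Δ₁) (h₂ : IsOrbit Γ Δ₂)
    (hΔ₁ : Δ₁ ⊆ grpSupp Γ₁) (hΔ₂ : Δ₂ ⊆ grpSupp Γ₂) :
    (∀ v ∈ Δ₁, ∀ w ∈ Δ₂, G.Adj v w) ∨ (∀ v ∈ Δ₁, ∀ w ∈ Δ₂, ¬ G.Adj v w) := by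
  obtain ⟨ω₁, rfl⟩ := h₁
  obtain ⟨ω₂, rfl⟩ := h₂
  have adj_iff : ∀ v ∈ orbit Γ ω₁, ∀ w ∈ orbit Γ ω₂, G.Adj v w ↔ G.Adj ω₁ ω₂ := by
    intro v hv w hw
    have hω₁ : ω₁ ∉ grpSupp Γ₂ := Set.disjoint_left.mp hdisj (hΔ₁ (mem_orbit_self ω₁))
    have hw' : w ∉ grpSupp Γ₁ := Set.disjoint_right.mp hdisj (hΔ₂ hw)
    obtain ⟨φ, hφ, rfl, rfl⟩ :=
      exists_mem_apply_eq_and_apply_eq hle₁ hle₂ hprod hω₁ hv hw hw'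
    exact ((hAut φ).mp hφ).1 ω₁ ω₂
  by_cases hadj : G.Adj ω₁ ω₂
  · exact Or.inl fun v hv w hw => (adj_iff v hv w hw).mpr hadj
  · exact Or.inr fun v hv w hw => mt (adj_iff v hv w hw).mp hadj

/-- Orbits lying in different factors of a disjoint direct decomposition of the
automorphism group of a colored graph are homogeneously connected. -/
theorem orbits_in_different_factors_homogeneously_connected
    {V C : Type*} [Fintype V] (G : SimpleGraph V) (col : V → C)
    (Γ Γ₁ Γ₂ : Subgroup (Equiv.Perm V))
    (hAut : ∀ φ : Equiv.Perm V, φ ∈ Γ ↔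
      ((∀ v w, G.Adj (φ v) (φ w) ↔ G.Adj v w) ∧ ∀ v, col (φ v) = col v))
    (hle₁ : Γ₁ ≤ Γ) (hle₂ : Γ₂ ≤ Γ)
    (hdisj : Disjoint (grpSupp Γ₁) (grpSupp Γ₂))
    (hprod : ∀ g ∈ Γ, ∃ g₁ ∈ Γ₁, ∃ g₂ ∈ Γ₂, g = g₁ * g₂)
    (Δ₁ Δ₂ : Set V) (h₁ : IsOrbit Γ Δ₁) (h₂ : IsOrbit Γ Δ₂)
    (hΔ₁ : Δ₁ ⊆ grpSupp Γ₁) (hΔ₂ : Δ₂ ⊆ grpSupp Γ₂) :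
    (∀ v ∈ Δ₁, ∀ w ∈ Δ₂, G.Adj v w) ∨ (∀ v ∈ Δ₁, ∀ w ∈ Δ₂, ¬ G.Adj v w) :=
  orbits_in_different_factors_homogeneously_connected_general G col Γ Γ₁ Γ₂ hAut hle₁ hle₂ hdisj
    hprod Δ₁ Δ₂ h₁ h₂ hΔ₁ hΔ₂
end
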